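/- arXiv:2410.07098 — 7 statements merged into one kernel-verified Lean document; each statement's English description precedes it below -/
import Mathlib

section
/- For every red-blue coloring χ of all pairs of the linearly ordered 5-element set {1 < 2 < 3 < 4 < 5}, there exist four elements i_1 < i_2 < i_3 < i_4 such that the coloring induced by χ on {i_1, i_2, i_3, i_4} (with the inherited order) is admissible, i.e., its dependency digraph contains no directed cycle. -/
/-- The color of the pair `{x, y}` under `χ`, where `χ i j` is only meaningful
for `i < j` (`true` = red, `false` = blue). -/
def colorOf {k : ℕ} (χ : Fin k → Fin k → Bool) (x y : Fin k) : Bool :=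
  if x < y then χ x y else χ y x

/-- `(a, b)` is a directed edge of the dependency digraph `D(χ)`: there are
consecutive vertices `i, i+1` with `b ∈ {i, i+1}`, `a ∉ {i, i+1}`,
`χ(i, i+1)` red, and both pairs `{i, a}`, `{i+1, a}` blue. -/
def DepEdge {k : ℕ} (χ : Fin k → Fin k → Bool) (a b : Fin k) : Prop :=
  ∃ i i' : Fin k, (i : ℕ) + 1 = (i' : ℕ) ∧ (b = i ∨ b = i') ∧ a ≠ i ∧ a ≠ i' ∧
    χ i i' = true ∧ colorOf χ i a = false ∧ colorOf χ i' a = false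

/-- `χ` is admissible: its dependency digraph has no directed cycle. -/
def Admissible {k : ℕ} (χ : Fin k → Fin k → Bool) : Prop :=
  ∀ a : Fin k, ¬ Relation.TransGen (DepEdge χ) a a

instance {k : ℕ} (χ : Fin k → Fin k → Bool) (a b : Fin k) : Decidable (DepEdge χ a b) := by
  unfold DepEdge; infer_instance

/-- The strictly monotone map `Fin 4 → Fin 5` skipping `m`. -/
def gm (m : Fin 5) (i : Fin 4) : Fin 5 :=
  if (i : ℕ) < (m : ℕ) then ⟨i, by omega⟩ else ⟨(i : ℕ) + 1, by omega⟩

lemma gm_mono (m : Fin 5) : StrictMono (gm m) := by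
  intro a b h
  simp only [gm, Fin.lt_def] at h ⊢
  split_ifs <;> simp <;> omega

/-- Build a coloring of `Fin 5` from the ten ordered-pair bits. -/
def mk (b01 b02 b03 b04 b12 b13 b14 b23 b24 b34 : Bool) : Fin 5 → Fin 5 → Bool :=
  fun i j => match (i : ℕ), (j : ℕ) with
  | 0, 1 => b01 | 0, 2 => b02 | 0, 3 => b03 | 0, 4 => b04
  | 1, 2 => b12 | 1, 3 => b13 | 1, 4 => b14
  | 2, 3 => b23 | 2, 4 => b24
  | 3, 4 => b34
  | _, _ => false

/-- All 24 permutations of `Fin 4`, as plain functions. -/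
def perms : List (Fin 4 → Fin 4) :=
  [![0,1,2,3], ![0,1,3,2], ![0,2,1,3], ![0,2,3,1], ![0,3,1,2], ![0,3,2,1],
   ![1,0,2,3], ![1,0,3,2], ![1,2,0,3], ![1,2,3,0], ![1,3,0,2], ![1,3,2,0],
   ![2,0,1,3], ![2,0,3,1], ![2,1,0,3], ![2,1,3,0], ![2,3,0,1], ![2,3,1,0],
   ![3,0,1,2], ![3,0,2,1], ![3,1,0,2], ![3,1,2,0], ![3,2,0,1], ![3,2,1,0]]

/-- The boolean check: some 4-element subset admits a topological ranking. -/
def good (χ5 : Fin 5 → Fin 5 → Bool) : Bool :=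
  (List.finRange 5).any fun m => perms.any fun f =>
    decide (∀ a b : Fin 4, DepEdge (fun i j => χ5 (gm m i) (gm m j)) a b → f a < f b)

lemma admissible_of_rank {k : ℕ} {χ' : Fin k → Fin k → Bool} (f : Fin k → Fin k)
    (h : ∀ a b, DepEdge χ' a b → f a < f b) : Admissible χ' := by
  intro a hcyc
  have key : ∀ x y : Fin k, Relation.TransGen (DepEdge χ') x y → f x < f y := by
    intro x y hxy
    induction hxy with
    | single h1 => exact h _ _ h1
    | tail _ h2 ih => exact ih.trans (h _ _ h2)
  exact lt_irrefl _ (key a a hcyc)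

lemma colorOf_congr {χ₁ χ₂ : Fin 5 → Fin 5 → Bool}
    (hagree : ∀ i j : Fin 5, i < j → χ₁ i j = χ₂ i j)
    {g : Fin 4 → Fin 5} (hg : StrictMono g) {x y : Fin 4} (hxy : x ≠ y) :
    colorOf (fun i j => χ₁ (g i) (g j)) x y = colorOf (fun i j => χ₂ (g i) (g j)) x y := by
  rcases lt_or_gt_of_ne hxy with h | h
  · simp only [colorOf, if_pos h]
    exact hagree _ _ (hg h)
  · simp only [colorOf, if_neg (not_lt.2 h.le)]
    exact hagree _ _ (hg h)

lemma depEdge_imp {χ₁ χ₂ : Fin 5 → Fin 5 → Bool}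
    (hagree : ∀ i j : Fin 5, i < j → χ₁ i j = χ₂ i j)
    {g : Fin 4 → Fin 5} (hg : StrictMono g) {a b : Fin 4}
    (h : DepEdge (fun i j => χ₁ (g i) (g j)) a b) :
    DepEdge (fun i j => χ₂ (g i) (g j)) a b := by
  obtain ⟨i, i', h1, h2, h3, h4, h5, h6, h7⟩ := h
  have hii' : i < i' := by
    rw [Fin.lt_def]; omega
  refine ⟨i, i', h1, h2, h3, h4, ?_, ?_, ?_⟩
  · simpa only [← hagree _ _ (hg hii')] using h5
  · rw [← colorOf_congr hagree hg (Ne.symm h3)]; exact h6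
  · rw [← colorOf_congr hagree hg (Ne.symm h4)]; exact h7

set_option maxRecDepth 100000 in
set_option maxHeartbeats 1000000000 in
lemma main_false_false_false_false : ∀ b12 b13 b14 b23 b24 b34 : Bool,
    good (mk false false false false b12 b13 b14 b23 b24 b34) = true := by decide

set_option maxRecDepth 100000 in
set_option maxHeartbeats 1000000000 in
lemma main_false_false_false_true : ∀ b12 b13 b14 b23 b24 b34 : Bool,
    good (mk false false false true b12 b13 b14 b23 b24 b34) = true := by decide

set_option maxRecDepth 100000 in
set_option maxHeartbeats 1000000000 in
lemma main_false_false_true_false : ∀ b12 b13 b14 b23 b24 b34 : Bool,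
    good (mk false false true false b12 b13 b14 b23 b24 b34) = true := by decide

set_option maxRecDepth 100000 in
set_option maxHeartbeats 1000000000 in
lemma main_false_false_true_true : ∀ b12 b13 b14 b23 b24 b34 : Bool,
    good (mk false false true true b12 b13 b14 b23 b24 b34) = true := by decide

set_option maxRecDepth 100000 in
set_option maxHeartbeats 1000000000 in
lemma main_false_true_false_false : ∀ b12 b13 b14 b23 b24 b34 : Bool,
    good (mk false true false false b12 b13 b14 b23 b24 b34) = true := by decide

set_option maxRecDepth 100000 in
set_option maxHeartbeats 1000000000 in
lemma main_false_true_false_true : ∀ b12 b13 b14 b23 b24 b34 : Bool,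
    good (mk false true false true b12 b13 b14 b23 b24 b34) = true := by decide

set_option maxRecDepth 100000 in
set_option maxHeartbeats 1000000000 in
lemma main_false_true_true_false : ∀ b12 b13 b14 b23 b24 b34 : Bool,
    good (mk false true true false b12 b13 b14 b23 b24 b34) = true := by decide

set_option maxRecDepth 100000 in
set_option maxHeartbeats 1000000000 in
lemma main_false_true_true_true : ∀ b12 b13 b14 b23 b24 b34 : Bool,
    good (mk false true true true b12 b13 b14 b23 b24 b34) = true := by decide

set_option maxRecDepth 100000 in
set_option maxHeartbeats 1000000000 in
lemma main_true_false_false_false : ∀ b12 b13 b14 b23 b24 b34 : Bool,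
    good (mk true false false false b12 b13 b14 b23 b24 b34) = true := by decide

set_option maxRecDepth 100000 in
set_option maxHeartbeats 1000000000 in
lemma main_true_false_false_true : ∀ b12 b13 b14 b23 b24 b34 : Bool,
    good (mk true false false true b12 b13 b14 b23 b24 b34) = true := by decide

set_option maxRecDepth 100000 in
set_option maxHeartbeats 1000000000 in
lemma main_true_false_true_false : ∀ b12 b13 b14 b23 b24 b34 : Bool,
    good (mk true false true false b12 b13 b14 b23 b24 b34) = true := by decide

set_option maxRecDepth 100000 in
set_option maxHeartbeats 1000000000 in
lemma main_true_false_true_true : ∀ b12 b13 b14 b23 b24 b34 : Bool,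
    good (mk true false true true b12 b13 b14 b23 b24 b34) = true := by decide

set_option maxRecDepth 100000 in
set_option maxHeartbeats 1000000000 in
lemma main_true_true_false_false : ∀ b12 b13 b14 b23 b24 b34 : Bool,
    good (mk true true false false b12 b13 b14 b23 b24 b34) = true := by decide

set_option maxRecDepth 100000 in
set_option maxHeartbeats 1000000000 in
lemma main_true_true_false_true : ∀ b12 b13 b14 b23 b24 b34 : Bool,
    good (mk true true false true b12 b13 b14 b23 b24 b34) = true := by decide

set_option maxRecDepth 100000 in
set_option maxHeartbeats 1000000000 in
lemma main_true_true_true_false : ∀ b12 b13 b14 b23 b24 b34 : Bool,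
    good (mk true true true false b12 b13 b14 b23 b24 b34) = true := by decide

set_option maxRecDepth 100000 in
set_option maxHeartbeats 1000000000 in
lemma main_true_true_true_true : ∀ b12 b13 b14 b23 b24 b34 : Bool,
    good (mk true true true true b12 b13 b14 b23 b24 b34) = true := by decide

lemma main : ∀ b01 b02 b03 b04 b12 b13 b14 b23 b24 b34 : Bool,
    good (mk b01 b02 b03 b04 b12 b13 b14 b23 b24 b34) = true := by
  intro b01 b02 b03 b04
  cases b01 <;> cases b02 <;> cases b03 <;> cases b04
  · exact main_false_false_false_false
  · exact main_false_false_false_true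
  · exact main_false_false_true_false
  · exact main_false_false_true_true
  · exact main_false_true_false_false
  · exact main_false_true_false_true
  · exact main_false_true_true_false
  · exact main_false_true_true_true
  · exact main_true_false_false_false
  · exact main_true_false_false_true
  · exact main_true_false_true_false
  · exact main_true_false_true_true
  · exact main_true_true_false_false
  · exact main_true_true_false_true
  · exact main_true_true_true_false
  · exact main_true_true_true_true

theorem stmt_6 (χ : Fin 5 → Fin 5 → Bool) :
    ∃ g : Fin 4 → Fin 5, StrictMono g ∧ Admissible (fun i j => χ (g i) (g j)) := by
  set ψ := mk (χ 0 1) (χ 0 2) (χ 0 3) (χ 0 4) (χ 1 2) (χ 1 3) (χ 1 4) (χ 2 3) (χ 2 4) (χ 3 4) with hψ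
  have hagree : ∀ i j : Fin 5, i < j → χ i j = ψ i j := by
    intro i j hij
    fin_cases i <;> fin_cases j <;> first | rfl | exact absurd hij (by decide)
  have hg : good ψ = true := main _ _ _ _ _ _ _ _ _ _
  rw [good, List.any_eq_true] at hg
  obtain ⟨m, -, hm⟩ := hg
  rw [List.any_eq_true] at hm
  obtain ⟨f, -, hf⟩ := hm
  rw [decide_eq_true_eq] at hf
  refine ⟨gm m, gm_mono m, ?_⟩
  apply admissible_of_rank f
  intro a b hab
  exact hf a b (depEdge_imp hagree (gm_mono m) hab)
end

section
/- Let k ≥ 2 and N = (k² − k + 2)/2. For every red-blue coloring χ of all pairs of the linearly ordered set {1 < 2 < ... < N}, there exist k elements i_1 < i_2 < ... < i_k such that the coloring induced by χ on {i_1, ..., i_k} (with the inherited order) is admissible, i.e., its dependency digraph contains no directed cycle. -/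
/-- Length of the longest increasing "blue path" (consecutive pairs blue)
ending at `v`. -/
def hgt {N : ℕ} (χ : Fin N → Fin N → Bool) : Fin N → ℕ := fun v =>
  ((Finset.univ.filter fun u : Fin N => u < v ∧ χ u v = false).attach.sup fun u =>
    hgt χ u.1) + 1
termination_by v => (v : ℕ)
decreasing_by exact ((Finset.mem_filter.mp u.2).2).1

theorem hgt_pos {N : ℕ} (χ : Fin N → Fin N → Bool) (v : Fin N) : 1 ≤ hgt χ v := by
  rw [hgt]; omega

theorem hgt_lt {N : ℕ} (χ : Fin N → Fin N → Bool) {u v : Fin N} (h : u < v)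
    (hb : χ u v = false) : hgt χ u < hgt χ v := by
  conv_rhs => rw [hgt]
  have hm : u ∈ Finset.univ.filter fun u : Fin N => u < v ∧ χ u v = false := by
    simp [h, hb]
  have h2 : hgt χ u ≤ (Finset.univ.filter fun u : Fin N => u < v ∧ χ u v = false).attach.sup
      fun u => hgt χ u.1 :=
    Finset.le_sup (f := fun u' : {x // x ∈ Finset.univ.filter
      fun u : Fin N => u < v ∧ χ u v = false} => hgt χ u'.1) (Finset.mem_attach _ ⟨u, hm⟩)
  omega

theorem chain_exists {N : ℕ} (χ : Fin N → Fin N → Bool) (v : Fin N) :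
    ∃ c : ℕ → Fin N,
      (∀ p q, p < q → q < hgt χ v → c p < c q) ∧
      c (hgt χ v - 1) = v ∧
      (∀ p, p + 1 < hgt χ v → χ (c p) (c (p + 1)) = false) := by
  suffices h : ∀ n : ℕ, ∀ v : Fin N, (v : ℕ) = n → ∃ c : ℕ → Fin N,
      (∀ p q, p < q → q < hgt χ v → c p < c q) ∧
      c (hgt χ v - 1) = v ∧
      (∀ p, p + 1 < hgt χ v → χ (c p) (c (p + 1)) = false) from h v v rfl
  intro n
  induction n using Nat.strong_induction_on with
  | _ n ih =>
    intro v hv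
    set s := Finset.univ.filter fun u : Fin N => u < v ∧ χ u v = false with hs
    rcases s.eq_empty_or_nonempty with he | hne
    · have h1 : hgt χ v = 1 := by rw [hgt, ← hs, he]; simp
      exact ⟨fun _ => v, by omega, by rw [h1], by omega⟩
    · obtain ⟨u, hu, hsup⟩ := Finset.exists_mem_eq_sup s.attach (hne.attach)
        (fun u => hgt χ u.1)
      have hum := Finset.mem_filter.mp u.2
      have hulv : u.1 < v := hum.2.1
      have hub : χ u.1 v = false := hum.2.2
      have hv1 : hgt χ v = hgt χ u.1 + 1 := by
        conv_lhs => rw [hgt, ← hs, hsup]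
      obtain ⟨c, hc1, hc2, hc3⟩ := ih u.1 (by omega) u.1 rfl
      set m := hgt χ u.1 with hm
      have hm1 : 1 ≤ m := hgt_pos χ u.1
      refine ⟨fun p => if p < m then c p else v, ?_, ?_, ?_⟩
      · intro p q hpq hq
        rw [hv1] at hq
        by_cases hq' : q < m
        · simp only [if_pos hq', if_pos (by omega : p < m)]
          exact hc1 p q hpq hq'
        · simp only [if_neg hq', if_pos (by omega : p < m)]
          have hple : c p ≤ u.1 := by
            rcases eq_or_lt_of_le (by omega : p ≤ m - 1) with h | h
            · rw [h, hc2]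
            · exact le_of_lt (hc2 ▸ hc1 p (m-1) h (by omega))
          exact lt_of_le_of_lt hple hulv
      · rw [hv1]
        simp only [Nat.add_sub_cancel, if_neg (lt_irrefl m)]
      · intro p hp
        rw [hv1] at hp
        by_cases hp' : p + 1 < m
        · simp only [if_pos hp', if_pos (by omega : p < m)]
          exact hc3 p hp'
        · have hpe : p = m - 1 := by omega
          simp only [if_pos (by omega : p < m), if_neg (by omega : ¬ p + 1 < m)]
          rw [hpe, hc2]
          exact hub

theorem colorOf_comp {k N : ℕ} (χ : Fin N → Fin N → Bool) {g : Fin k → Fin N}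
    (hg : StrictMono g) (x y : Fin k) :
    colorOf (fun i j => χ (g i) (g j)) x y = colorOf χ (g x) (g y) := by
  unfold colorOf
  by_cases h : x < y
  · rw [if_pos h, if_pos (hg h)]
  · rw [if_neg h, if_neg (fun hc => h (hg.lt_iff_lt.mp hc))]

theorem admissible_of_lt {k : ℕ} (χ : Fin k → Fin k → Bool)
    (h : ∀ a b, DepEdge χ a b → (a : ℕ) < (b : ℕ)) : Admissible χ := by
  intro a ha
  have key : ∀ x y : Fin k, Relation.TransGen (DepEdge χ) x y → (x : ℕ) < (y : ℕ) := by
    intro x y hxy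
    induction hxy with
    | single h1 => exact h _ _ h1
    | tail _ h1 ih => exact lt_trans ih (h _ _ h1)
  exact lt_irrefl _ (key a a ha)

/-- Case 2 of the main argument: a "blue path followed by a red clique". -/
theorem case2 {k N : ℕ} (hk : 2 ≤ k) (χ : Fin N → Fin N → Bool) (t : ℕ)
    (ht1 : 1 ≤ t) (htk : t ≤ k - 1) (F : Finset (Fin N))
    (hF : ∀ v ∈ F, hgt χ v = t) (hcard : k - t + 1 ≤ F.card) :
    ∃ g : Fin k → Fin N, StrictMono g ∧ Admissible (fun i j => χ (g i) (g j)) := by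
  have hFne : F.Nonempty := Finset.card_pos.mp (by omega)
  set u := F.min' hFne with hu
  have huF : u ∈ F := F.min'_mem hFne
  have hut : hgt χ u = t := hF u huF
  obtain ⟨c, hc1, hc2, hc3⟩ := chain_exists χ u
  rw [hut] at hc1 hc2 hc3
  set W := F.erase u with hW
  have hWcard : k - t ≤ W.card := by
    rw [hW, Finset.card_erase_of_mem huF]; omega
  set w := W.orderEmbOfCardLe hWcard with hwdef
  have hwmem : ∀ i : Fin (k - t), w i ∈ W := fun i => W.orderEmbOfCardLe_mem hWcard i
  have hwF : ∀ i : Fin (k - t), w i ∈ F := fun i => Finset.mem_of_mem_erase (hwmem i)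
  have huw : ∀ i : Fin (k - t), u < w i := by
    intro i
    have h1 := F.min'_le _ (hwF i)
    have h2 : w i ≠ u := Finset.ne_of_mem_erase (hwmem i)
    exact lt_of_le_of_ne h1 (Ne.symm h2)
  -- the selection
  set g : Fin k → Fin N := fun i =>
    if h : (i : ℕ) < t then c i else w ⟨(i : ℕ) - t, by omega⟩ with hgdef
  have hgval_lt : ∀ i : Fin k, (i : ℕ) < t → g i = c i := by
    intro i h; rw [hgdef]; simp only [dif_pos h]
  have hgval_ge : ∀ (i : Fin k) (h : t ≤ (i : ℕ)),
      g i = w ⟨(i : ℕ) - t, by omega⟩ := by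
    intro i h; rw [hgdef]; simp only [dif_neg (by omega : ¬ (i : ℕ) < t)]
  have hcle : ∀ p : ℕ, p < t → c p ≤ u := by
    intro p hp
    rcases eq_or_lt_of_le (by omega : p ≤ t - 1) with h | h
    · rw [h, hc2]
    · exact le_of_lt (hc2 ▸ hc1 p (t - 1) h (by omega))
  have hg : StrictMono g := by
    intro i j hij
    by_cases hi : (i : ℕ) < t
    · by_cases hj : (j : ℕ) < t
      · rw [hgval_lt i hi, hgval_lt j hj]
        exact hc1 i j hij hj
      · rw [hgval_lt i hi, hgval_ge j (by omega)]
        exact lt_of_le_of_lt (hcle i hi) (huw _)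
    · have hj : ¬ (j : ℕ) < t := by
        have : (i : ℕ) < (j : ℕ) := hij
        omega
      rw [hgval_ge i (by omega), hgval_ge j (by omega)]
      exact w.strictMono (by
        show ((⟨(i : ℕ) - t, _⟩ : Fin (k - t)) : ℕ) < ((⟨(j : ℕ) - t, _⟩ : Fin (k - t)) : ℕ)
        have : (i : ℕ) < (j : ℕ) := hij
        simp only []
        omega)
  have hgF : ∀ i : Fin k, t - 1 ≤ (i : ℕ) → g i ∈ F := by
    intro i hi
    by_cases h : (i : ℕ) < t
    · have : (i : ℕ) = t - 1 := by omega
      rw [hgval_lt i h, this, hc2]; exact huF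
    · rw [hgval_ge i (by omega)]; exact hwF _
  have clique : ∀ x y : Fin N, x ∈ F → y ∈ F → x ≠ y → colorOf χ x y = true := by
    intro x y hx hy hxy
    unfold colorOf
    rcases lt_trichotomy x y with h | h | h
    · rw [if_pos h]
      by_contra hb
      have hb' : χ x y = false := by
        cases hxy : χ x y
        · rfl
        · exact absurd hxy hb
      have := hgt_lt χ h hb'
      rw [hF x hx, hF y hy] at this; omega
    · exact absurd h hxy
    · rw [if_neg (asymm h)]
      by_contra hb
      have hb' : χ y x = false := by
        cases hxy' : χ y x
        · rfl
        · exact absurd hxy' hb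
      have := hgt_lt χ h hb'
      rw [hF x hx, hF y hy] at this; omega
  refine ⟨g, hg, admissible_of_lt _ ?_⟩
  rintro a b ⟨i, i', hii, hb, hai, hai', hred, hbi, hbi'⟩
  have hred' : χ (g i) (g i') = true := hred
  -- the red consecutive pair lies in the clique part
  have hit : t - 1 ≤ (i : ℕ) := by
    by_contra h
    have hi : (i : ℕ) < t := by omega
    have hi' : (i' : ℕ) < t := by omega
    have hgi : g i = c i := hgval_lt i hi
    have hgi' : g i' = c ((i : ℕ) + 1) := by
      rw [hgval_lt i' hi', hii]
    rw [hgi, hgi'] at hred'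
    rw [hc3 i (by omega)] at hred'
    exact absurd hred' (by simp)
  -- the tail lies strictly in the path part
  have hat : (a : ℕ) < t - 1 := by
    by_contra h
    have haF : g a ∈ F := hgF a (by omega)
    have hiF : g i ∈ F := hgF i hit
    have hne : g i ≠ g a := fun hc => hai (hg.injective hc).symm
    have := clique (g i) (g a) hiF haF hne
    rw [colorOf_comp χ hg i a] at hbi
    rw [hbi] at this
    exact absurd this (by simp)
  rcases hb with rfl | rfl
  · omega
  · omega

theorem main_sel {k N : ℕ} (hk : 2 ≤ k) (h2N : k ^ 2 - k + 2 ≤ 2 * N)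
    (χ : Fin N → Fin N → Bool) :
    ∃ g : Fin k → Fin N, StrictMono g ∧ Admissible (fun i j => χ (g i) (g j)) := by
  by_cases hcase : ∃ v : Fin N, k ≤ hgt χ v
  · -- an all-blue consecutive path of length k
    obtain ⟨v, hv⟩ := hcase
    obtain ⟨c, hc1, _, hc3⟩ := chain_exists χ v
    refine ⟨fun i => c i, ?_, admissible_of_lt _ ?_⟩
    · intro i j hij
      exact hc1 i j hij (lt_of_lt_of_le j.2 hv)
    · rintro a b ⟨i, i', hii, hb, hai, hai', hred, hbi, hbi'⟩
      exfalso
      have hred' : χ (c (i : ℕ)) (c (i' : ℕ)) = true := hred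
      have hblue : χ (c (i : ℕ)) (c ((i : ℕ) + 1)) = false :=
        hc3 i (by have := i'.2; omega)
      rw [hii] at hblue
      rw [hblue] at hred'
      exact absurd hred' (by simp)
  · -- pigeonhole over the levels
    push_neg at hcase
    have hmem : ∀ v : Fin N, v ∈ Finset.univ → hgt χ v ∈ Finset.Icc 1 (k - 1) := by
      intro v _
      rw [Finset.mem_Icc]
      exact ⟨hgt_pos χ v, by have := hcase v; omega⟩
    have hsum : (Finset.univ : Finset (Fin N)).card =
        ∑ t ∈ Finset.Icc 1 (k - 1),
          ((Finset.univ : Finset (Fin N)).filter fun v => hgt χ v = t).card :=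
      Finset.card_eq_sum_card_fiberwise hmem
    rw [Finset.card_univ, Fintype.card_fin] at hsum
    -- find a big fiber
    by_contra hcon
    have hsmall : ∀ t ∈ Finset.Icc 1 (k - 1),
        ((Finset.univ : Finset (Fin N)).filter fun v => hgt χ v = t).card ≤ k - t := by
      intro t ht
      rw [Finset.mem_Icc] at ht
      by_contra h
      push_neg at h
      obtain ⟨g, hgmono, hgadm⟩ := case2 hk χ t ht.1 ht.2
        ((Finset.univ : Finset (Fin N)).filter fun v => hgt χ v = t)
        (fun v hv => (Finset.mem_filter.mp hv).2) (by omega)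
      exact hcon ⟨g, hgmono, hgadm⟩
    have hle : N ≤ ∑ t ∈ Finset.Icc 1 (k - 1), (k - t) := by
      rw [hsum]
      exact Finset.sum_le_sum hsmall
    -- compute the sums
    have hS : ∑ t ∈ Finset.Icc 1 (k - 1), (k - t) = ∑ t ∈ Finset.Icc 1 (k - 1), t := by
      refine Finset.sum_nbij' (fun t => k - t) (fun t => k - t) ?_ ?_ ?_ ?_ ?_ <;>
        (intro a ha; rw [Finset.mem_Icc] at ha) <;>
        first
          | (simp only [Finset.mem_Icc]; omega)
          | (show k - (k - a) = a; omega)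
          | rfl
          | omega
    have hins : Finset.range k = insert 0 (Finset.Icc 1 (k - 1)) := by
      ext x
      simp only [Finset.mem_range, Finset.mem_insert, Finset.mem_Icc]
      omega
    have h0 : (0 : ℕ) ∉ Finset.Icc 1 (k - 1) := by simp
    have hrange : ∑ t ∈ Finset.range k, t = ∑ t ∈ Finset.Icc 1 (k - 1), t := by
      rw [hins, Finset.sum_insert h0, Nat.zero_add]
    have hgauss : (∑ t ∈ Finset.range k, t) * 2 = k * (k - 1) :=
      Finset.sum_range_id_mul_two k
    have hkk : k * (k - 1) = k ^ 2 - k := by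
      have h1 : k * (k - 1) = k * k - k := by
        rw [Nat.mul_sub, Nat.mul_one]
      rw [h1, pow_two]
    have h2S : (∑ t ∈ Finset.Icc 1 (k - 1), t) * 2 = k ^ 2 - k := by
      rw [← hkk, ← hgauss, hrange]
    rw [hS] at hle
    have hk2 : k ≤ k ^ 2 := by
      calc k = k * 1 := (Nat.mul_one k).symm
      _ ≤ k * k := Nat.mul_le_mul_left k (by omega)
      _ = k ^ 2 := (pow_two k).symm
    omega

theorem stmt_7 (k : ℕ) (hk : 2 ≤ k)
    (χ : Fin ((k ^ 2 - k + 2) / 2) → Fin ((k ^ 2 - k + 2) / 2) → Bool) :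
    ∃ g : Fin k → Fin ((k ^ 2 - k + 2) / 2),
      StrictMono g ∧ Admissible (fun i j => χ (g i) (g j)) := by
  have he : Even (k ^ 2 - k) := by
    have h1 : k ^ 2 - k = (k - 1) * ((k - 1) + 1) := by
      have h2 : (k - 1) + 1 = k := by omega
      rw [h2, pow_two, Nat.sub_one_mul]
    rw [h1]
    exact Nat.even_mul_succ_self (k - 1)
  obtain ⟨m, hm⟩ := he
  exact main_sel hk (by omega) χ
end

section
/- Let r ≥ 1 and h ≥ 2 be integers, k = (2h−2)^r + 1, and ε > 0. Let ≺_1, ..., ≺_r be partial orders on an n-element set P and let G be the graph on P in which distinct x, y are adjacent iff x and y are comparable in at least one ≺_i (the r-comparability graph). If G contains at least ε·n^k copies of K_k, then for some i ∈ {1,...,r} the comparability graph of ≺_i contains K_h[⌈ε·n/r⌉]. -/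
/-- The number of `r`-element vertex subsets of `G` inducing a complete subgraph
(copies of `K_r`). -/
noncomputable def cliqueCount {V : Type*} [Fintype V] (G : SimpleGraph V) (r : ℕ) : ℕ :=
  Set.ncard {s : Finset V | s.card = r ∧ G.IsClique (s : Set V)}

/-- `G` contains `K_r[t]`: `r` pairwise disjoint vertex sets of size `t` with all
pairs of vertices from distinct sets adjacent. -/
def ContainsBlowup {V : Type*} (G : SimpleGraph V) (r t : ℕ) : Prop :=
  ∃ A : Fin r → Finset V,
    (∀ i, (A i).card = t) ∧
    (∀ i j, i ≠ j → Disjoint (A i) (A j)) ∧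
    (∀ i j, i ≠ j → ∀ x ∈ A i, ∀ y ∈ A j, G.Adj x y)

/-- The ordered graph `G` on `Fin n` contains an induced monotone path with `m`
vertices: `v 0 < v 1 < ⋯ < v (m-1)` with adjacency exactly between consecutive
vertices. -/
def HasIndMonPath {n : ℕ} (G : SimpleGraph (Fin n)) (m : ℕ) : Prop :=
  ∃ v : Fin m → Fin n, StrictMono v ∧
    ∀ i j : Fin m, G.Adj (v i) (v j) ↔ ((i : ℕ) + 1 = (j : ℕ) ∨ (j : ℕ) + 1 = (i : ℕ))

/-- The comparability graph of a relation `R` (e.g. a strict partial order):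
distinct elements are adjacent iff they are related in one direction. -/
def compGraph {α : Type*} (R : α → α → Prop) : SimpleGraph α where
  Adj x y := x ≠ y ∧ (R x y ∨ R y x)
  symm := ⟨fun _ _ h => ⟨h.1.symm, h.2.symm⟩⟩
  loopless := ⟨fun _ h => h.1 rfl⟩

/-- The `r`-comparability graph of relations `R 0, …, R (r-1)`: distinct
elements are adjacent iff they are comparable in at least one of them. -/
def multiCompGraph {α : Type*} {r : ℕ} (R : Fin r → α → α → Prop) : SimpleGraph α where
  Adj x y := x ≠ y ∧ ∃ i, R i x y ∨ R i y x
  symm := ⟨fun _ _ h => ⟨h.1.symm, h.2.imp (fun _ hi => hi.symm)⟩⟩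
  loopless := ⟨fun _ h => h.1 rfl⟩

/-!
A `k`-clique of the `r`-comparability graph, `k = (2h-2)^r + 1`, contains a chain of length
`2h-1` in one of the orders: otherwise the heights with respect to the `r` orders embed the clique
into `[2h-2]^r` (Mirsky). Hence, up to a factor `r n^(k-2h+1)`, the `k`-cliques are counted by the
chains `a₀ ≺ e₀ ≺ a₁ ≺ ⋯ ≺ e_{h-2} ≺ a_{h-1}` of a single order `≺_i`. Fixing the best odd part `e`,
the number of chains is at most `n^(h-1) ∏ⱼ |gapⱼ(e)|`, where `gapⱼ(e)` is the interval
`(e_{j-1}, e_j)`. So `ε n^h ≤ r ∏ⱼ |gapⱼ(e)|`, and as every gap has at most `n` elements, each has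
at least `ε n / r`. Elements of distinct gaps are `≺_i`-comparable, so the gaps span `K_h[⌈εn/r⌉]`.
-/

open Finset

section Chains

variable {α : Type*} (Q : α → α → Prop)

theorem injective_of_forall_lt_rel [Std.Irrefl Q] {d : ℕ} {c : Fin d → α}
    (hc : ∀ p q, p < q → Q (c p) (c q)) : Function.Injective c := by
  intro p q hpq
  by_contra hne
  rcases lt_or_gt_of_ne hne with hlt | hlt
  · exact irrefl_of Q _ (hpq ▸ hc p q hlt)
  · exact irrefl_of Q _ (hpq ▸ hc q p hlt)

theorem exists_rank_of_forall_not_chain [IsStrictOrder α Q] {S : Finset α} {m : ℕ}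
    (hS : ∀ c : Fin (m + 1) → α, (∀ p, c p ∈ S) → ¬ ∀ p q, p < q → Q (c p) (c q)) :
    ∃ f : α → ℕ, (∀ x ∈ S, f x < m) ∧ ∀ x ∈ S, ∀ y ∈ S, Q x y → f x < f y := by
  classical
  let _ : PartialOrder α := partialOrderOfSO Q
  have height_lt : ∀ x : S, Order.height x < m := by
    intro x
    by_contra! hx
    obtain ⟨p, -, rfl⟩ := Order.exists_series_of_le_height x hx
    exact hS (fun i => (p i).1) (fun i => (p i).2) fun a b hab => p.strictMono hab
  have height_eq : ∀ x : S, ((Order.height x).toNat : ℕ∞) = Order.height x :=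
    fun x => ENat.natCast_toNat (height_lt x).ne_top
  refine ⟨fun x => if hx : x ∈ S then (Order.height (⟨x, hx⟩ : S)).toNat else 0, ?_, ?_⟩
  · intro x hx
    have := height_lt ⟨x, hx⟩
    rw [← height_eq] at this
    simpa only [dif_pos hx] using ENat.natCast_lt_natCast.mp this
  · intro x hx y hy hxy
    have := Order.height_strictMono (show (⟨x, hx⟩ : S) < ⟨y, hy⟩ from hxy)
      ((height_lt _).trans (ENat.natCast_lt_top m))
    rw [← height_eq ⟨x, hx⟩, ← height_eq ⟨y, hy⟩] at this
    simpa only [dif_pos hx, dif_pos hy] using ENat.natCast_lt_natCast.mp this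

end Chains

section Counting

variable {α : Type*} [Fintype α] (Q : α → α → Prop) [DecidableRel Q]

def chainFinset (d : ℕ) : Finset (Fin d → α) :=
  univ.filter fun c => ∀ p q, p < q → Q (c p) (c q)

/-- For a chain `e`, this is the open interval `(e (j - 1), e j)`, unbounded at both ends. -/
def gap {m : ℕ} (e : Fin m → α) (j : Fin (m + 1)) : Finset α :=
  univ.filter fun z => ∀ i : Fin m, (i.castSucc < j → Q (e i) z) ∧ (j ≤ i.castSucc → Q z (e i))

theorem rel_of_mem_gap_of_lt [IsTrans α Q] {m : ℕ} {e : Fin m → α} {j j' : Fin (m + 1)}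
    (hjj' : j < j') {x y : α} (hx : x ∈ gap Q e j) (hy : y ∈ gap Q e j') : Q x y := by
  have hj : (j : ℕ) < m := by omega
  have hxe := ((mem_filter.1 hx).2 ⟨j, hj⟩).2 (le_of_eq (Fin.ext rfl))
  have hey := ((mem_filter.1 hy).2 ⟨j, hj⟩).1 (Fin.lt_def.2 (Fin.lt_def.1 hjj'))
  exact _root_.trans hxe hey

theorem card_chainFinset_le_sum_prod_card_gap (m : ℕ) :
    #(chainFinset Q (2 * m + 1)) ≤ ∑ e : Fin m → α, ∏ j, #(gap Q e j) := by
  classical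
  -- a chain is determined by its odd entries `e` and its even entries, which lie in the gaps of `e`
  calc #(chainFinset Q (2 * m + 1))
      ≤ #(univ.sigma fun e : Fin m → α => Fintype.piFinset (gap Q e)) := by
        refine card_le_card_of_injOn
          (fun c => ⟨fun i => c ⟨2 * i + 1, by omega⟩, fun j => c ⟨2 * j, by omega⟩⟩) ?_ ?_
        · intro c hc
          have hc : ∀ p q, p < q → Q (c p) (c q) := (mem_filter.1 hc).2
          simp only [coe_sigma, Set.mem_sigma_iff, coe_univ, Set.mem_univ, mem_coe,
            Fintype.mem_piFinset, gap, mem_filter, mem_univ, true_and]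
          refine fun j i => ⟨fun hij => hc _ _ ?_, fun hji => hc _ _ ?_⟩
          · simp only [Fin.lt_def, Fin.val_castSucc] at hij ⊢; omega
          · simp only [Fin.le_def, Fin.lt_def, Fin.val_castSucc] at hji ⊢; omega
        · intro c _ c' _ hcc'
          simp only [Sigma.mk.injEq, heq_eq_eq, funext_iff] at hcc'
          obtain ⟨hodd, heven⟩ := hcc'
          funext p
          obtain ⟨q, hq | hq⟩ := Nat.even_or_odd' p
          · rw [show p = ⟨2 * q, by omega⟩ from Fin.ext hq]
            exact heven ⟨q, by omega⟩
          · rw [show p = ⟨2 * q + 1, by omega⟩ from Fin.ext hq]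
            exact hodd ⟨q, by omega⟩
    _ = ∑ e : Fin m → α, ∏ j, #(gap Q e j) := by
        simp only [card_sigma, Fintype.card_piFinset]

theorem exists_card_chainFinset_le [Nonempty α] (m : ℕ) :
    ∃ e : Fin m → α, #(chainFinset Q (2 * m + 1)) ≤ Fintype.card α ^ m * ∏ j, #(gap Q e j) := by
  obtain ⟨e, -, he⟩ := exists_max_image univ (fun e : Fin m → α => ∏ j, #(gap Q e j))
    univ_nonempty
  refine ⟨e, (card_chainFinset_le_sum_prod_card_gap Q m).trans ?_⟩
  calc ∑ e' : Fin m → α, ∏ j, #(gap Q e' j)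
      ≤ #(univ : Finset (Fin m → α)) • ∏ j, #(gap Q e j) :=
        sum_le_card_nsmul _ _ _ fun e' _ => he e' (mem_univ _)
    _ = Fintype.card α ^ m * ∏ j, #(gap Q e j) := by
        simp only [card_univ, Fintype.card_fun, Fintype.card_fin, smul_eq_mul]

end Counting

theorem containsBlowup_of_le_card {V : Type*} {G : SimpleGraph V} {r t : ℕ}
    (A : Fin r → Finset V) (hA : ∀ i, t ≤ #(A i))
    (hadj : ∀ i j, i ≠ j → ∀ x ∈ A i, ∀ y ∈ A j, G.Adj x y) : ContainsBlowup G r t := by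
  choose B hBA hB using fun i => exists_subset_card_eq (hA i)
  refine ⟨B, hB, fun i j hij => disjoint_left.2 fun x hxi hxj => ?_,
    fun i j hij x hx y hy => hadj i j hij x (hBA i hx) y (hBA j hy)⟩
  exact G.loopless.irrefl x (hadj i j hij x (hBA i hxi) x (hBA j hxj))

theorem containsBlowup_compGraph_of_le_card_gap {α : Type*} [Fintype α] {Q : α → α → Prop}
    [DecidableRel Q] [IsStrictOrder α Q] {m t : ℕ} (e : Fin m → α)
    (he : ∀ j, t ≤ #(gap Q e j)) : ContainsBlowup (compGraph Q) (m + 1) t := by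
  refine containsBlowup_of_le_card (gap Q e) he fun j j' hjj' x hx y hy => ?_
  rcases lt_or_gt_of_ne hjj' with hlt | hlt
  · have hxy := rel_of_mem_gap_of_lt Q hlt hx hy
    exact ⟨ne_of_irrefl hxy, Or.inl hxy⟩
  · have hyx := rel_of_mem_gap_of_lt Q hlt hy hx
    exact ⟨(ne_of_irrefl hyx).symm, Or.inr hyx⟩

theorem cliqueCount_eq_card_cliqueFinset {V : Type*} [Fintype V] [DecidableEq V]
    (G : SimpleGraph V) [DecidableRel G.Adj] (k : ℕ) :
    cliqueCount G k = #(G.cliqueFinset k) := by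
  rw [cliqueCount, ← Set.ncard_coe_finset]
  congr 1
  ext s
  simp [SimpleGraph.isNClique_iff, and_comm]

section MultiComparability

variable {α : Type*} {r : ℕ} (R : Fin r → α → α → Prop) [∀ i, IsStrictOrder α (R i)]

theorem exists_chain_of_pow_lt_card {S : Finset α} {m : ℕ}
    (hS : (multiCompGraph R).IsClique (S : Set α)) (hcard : m ^ r < #S) :
    ∃ i, ∃ c : Fin (m + 1) → α, (∀ p, c p ∈ S) ∧ ∀ p q, p < q → R i (c p) (c q) := by
  by_contra hno
  choose f hf_lt hf_mono using fun i => exists_rank_of_forall_not_chain (R i) (S := S) (m := m)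
    fun c hcS hc => hno ⟨i, c, hcS, hc⟩
  have hinj : Set.InjOn (fun x i => f i x) S := by
    intro x hx y hy hxy
    by_contra hne
    obtain ⟨i, hi⟩ := (hS hx hy hne).2
    have hfi := congrFun hxy i
    rcases hi with hi | hi
    · exact (hf_mono i x hx y hy hi).ne hfi
    · exact (hf_mono i y hy x hx hi).ne hfi.symm
  have hle := card_le_card_of_injOn _ (t := Fintype.piFinset fun _ => range m)
    (fun x hx => Fintype.mem_piFinset.2 fun i => mem_range.2 (hf_lt i x hx)) hinj
  simp only [Fintype.card_piFinset, card_range, prod_const, card_univ, Fintype.card_fin] at hle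
  omega

variable [Fintype α] [DecidableEq α] [∀ i, DecidableRel (R i)]
  [DecidableRel (multiCompGraph R).Adj]

theorem card_cliqueFinset_le {k m : ℕ} (hk : m ^ r < k) :
    #((multiCompGraph R).cliqueFinset k) ≤
      ∑ i, #(chainFinset (R i) (m + 1)) * (Fintype.card α).choose (k - (m + 1)) := by
  calc #((multiCompGraph R).cliqueFinset k)
      ≤ #((univ.sigma fun i => chainFinset (R i) (m + 1) ×ˢ powersetCard (k - (m + 1)) univ).image
          fun x => image x.2.1 univ ∪ x.2.2) := by
        refine card_le_card fun s hs => ?_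
        obtain ⟨hclique, hcard⟩ := (multiCompGraph R).isNClique_iff.1
          (SimpleGraph.mem_cliqueFinset_iff.1 hs)
        obtain ⟨i, c, hcs, hc⟩ := exists_chain_of_pow_lt_card R hclique (hcard ▸ hk)
        have hsub : image c univ ⊆ s := image_subset_iff.2 fun p _ => hcs p
        have himage : #(image c univ) = m + 1 := by
          rw [card_image_of_injective _ (injective_of_forall_lt_rel (R i) hc), card_univ,
            Fintype.card_fin]
        refine mem_image.2 ⟨⟨i, c, s \ image c univ⟩, ?_, union_sdiff_of_subset hsub⟩
        simpa only [mem_sigma, mem_univ, mem_product, chainFinset, mem_filter, true_and,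
          mem_powersetCard, subset_univ, card_sdiff_of_subset hsub, himage, hcard, and_true]
          using hc
    _ ≤ #(univ.sigma fun i => chainFinset (R i) (m + 1) ×ˢ powersetCard (k - (m + 1)) univ) :=
        card_image_le
    _ = ∑ i, #(chainFinset (R i) (m + 1)) * (Fintype.card α).choose (k - (m + 1)) := by
        simp only [card_sigma, card_product, card_powersetCard, card_univ]

theorem exists_card_cliqueFinset_le_mul_card_gap [Nonempty α] (hr : 0 < r) {k m : ℕ}
    (hk : (2 * m) ^ r < k) :
    ∃ i, ∃ e : Fin m → α, ∀ j, #((multiCompGraph R).cliqueFinset k) ≤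
      r * #(gap (R i) e j) * Fintype.card α ^ (k - 1) := by
  set n := Fintype.card α
  have hmk : 2 * m + 1 ≤ k := by
    have := Nat.le_self_pow hr.ne' (2 * m)
    omega
  obtain ⟨i, -, hi⟩ := exists_max_image univ (fun i => #(chainFinset (R i) (2 * m + 1)))
    ⟨⟨0, hr⟩, mem_univ _⟩
  obtain ⟨e, he⟩ := exists_card_chainFinset_le (R i) m
  refine ⟨i, e, fun j => ?_⟩
  have hprod : ∏ j', #(gap (R i) e j') ≤ #(gap (R i) e j) * n ^ m := by
    rw [← mul_prod_erase univ _ (mem_univ j)]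
    gcongr
    calc ∏ j' ∈ univ.erase j, #(gap (R i) e j')
        ≤ n ^ #(univ.erase j) := prod_le_pow_card _ _ _ fun _ _ => card_le_univ _
      _ = n ^ m := by simp
  calc #((multiCompGraph R).cliqueFinset k)
      ≤ ∑ i', #(chainFinset (R i') (2 * m + 1)) * n.choose (k - (2 * m + 1)) :=
        card_cliqueFinset_le R hk
    _ ≤ ∑ _i' : Fin r, #(chainFinset (R i) (2 * m + 1)) * n ^ (k - (2 * m + 1)) :=
        sum_le_sum fun i' _ => Nat.mul_le_mul (hi i' (mem_univ _)) (Nat.choose_le_pow _ _)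
    _ = r * #(chainFinset (R i) (2 * m + 1)) * n ^ (k - (2 * m + 1)) := by
        simp only [sum_const, card_univ, Fintype.card_fin, smul_eq_mul, mul_assoc]
    _ ≤ r * (n ^ m * (#(gap (R i) e j) * n ^ m)) * n ^ (k - (2 * m + 1)) := by
        gcongr
        exact he.trans (by gcongr)
    _ = r * #(gap (R i) e j) * n ^ (k - 1) := by
        rw [show k - 1 = m + m + (k - (2 * m + 1)) by omega]
        ring

end MultiComparability

theorem stmt_10_general (r h : ℕ) (hr : 1 ≤ r) (hh : 2 ≤ h) (ε : ℝ)
    (α : Type) [Fintype α] (R : Fin r → α → α → Prop)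
    (hR : ∀ i, IsStrictOrder α (R i))
    (hclique : ε * (Fintype.card α : ℝ) ^ ((2 * h - 2) ^ r + 1) ≤
      (cliqueCount (multiCompGraph R) ((2 * h - 2) ^ r + 1) : ℝ)) :
    ∃ i : Fin r, ContainsBlowup (compGraph (R i)) h
      ⌈ε * (Fintype.card α : ℝ) / (r : ℝ)⌉₊ := by
  classical
  obtain ⟨m, rfl⟩ : ∃ m, h = m + 1 := ⟨h - 1, by omega⟩
  rw [show 2 * (m + 1) - 2 = 2 * m by omega] at hclique
  rcases (Fintype.card α).eq_zero_or_pos with hn | hn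
  · refine ⟨⟨0, hr⟩, containsBlowup_of_le_card (fun _ => ∅) (fun _ => ?_) (by simp)⟩
    simp [hn]
  have : Nonempty α := Fintype.card_pos_iff.1 hn
  obtain ⟨i, e, he⟩ := exists_card_cliqueFinset_le_mul_card_gap R hr (Nat.lt_succ_self _)
  refine ⟨i, containsBlowup_compGraph_of_le_card_gap e fun j => ?_⟩
  set n := Fintype.card α
  set K := (2 * m) ^ r
  have hnK : (0 : ℝ) < (n : ℝ) ^ K := by positivity
  have hgap : ε * n * n ^ K ≤ r * #(gap (R i) e j) * n ^ K := by
    have hcount : ((#((multiCompGraph R).cliqueFinset (K + 1)) : ℕ) : ℝ) ≤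
        r * #(gap (R i) e j) * n ^ K := by
      exact_mod_cast he j
    rw [cliqueCount_eq_card_cliqueFinset, pow_succ', ← mul_assoc] at hclique
    exact hclique.trans hcount
  rw [Nat.ceil_le, div_le_iff₀ (by positivity)]
  linarith [le_of_mul_le_mul_right hgap hnK]

theorem stmt_10 (r h : ℕ) (hr : 1 ≤ r) (hh : 2 ≤ h) (ε : ℝ) (hε : 0 < ε)
    (α : Type) [Fintype α] (R : Fin r → α → α → Prop)
    (hR : ∀ i, IsStrictOrder α (R i))
    (hclique : ε * (Fintype.card α : ℝ) ^ ((2 * h - 2) ^ r + 1) ≤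
      (cliqueCount (multiCompGraph R) ((2 * h - 2) ^ r + 1) : ℝ)) :
    ∃ i : Fin r, ContainsBlowup (compGraph (R i)) h
      ⌈ε * (Fintype.card α : ℝ) / (r : ℝ)⌉₊ :=
  stmt_10_general r h hr hh ε α R hR hclique
end

section
/- For every c > 0 there exist c' > 0 and n_0 such that the following holds for all n ≥ n_0. If G is an n-vertex graph with VC-dimension at most 1 and at least c·C(n,2) edges, then G contains K_2[⌊c'·n⌋]. -/
/-- `S` is shattered by the neighborhoods of `G`: for every `B ⊆ S` there is a
vertex `v` with `N_G(v) ∩ S = B`. -/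
def GraphShatters {V : Type*} (G : SimpleGraph V) (S : Finset V) : Prop :=
  ∀ B ⊆ S, ∃ v : V, ∀ x ∈ S, (G.Adj v x ↔ x ∈ B)

/-- The VC-dimension of the neighborhood set system of `G` is at most `d`. -/
def VCDimLE {V : Type*} (G : SimpleGraph V) (d : ℕ) : Prop :=
  ∀ S : Finset V, GraphShatters G S → S.card ≤ d

set_option linter.unusedSectionVars false

namespace VC1Aux

open Finset

variable {V : Type*} [Fintype V] [DecidableEq V] (G : SimpleGraph V) [DecidableRel G.Adj]

/-- Builder: two disjoint cross-complete sets of size `≥ t` give a blowup. -/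
lemma blowup2 (t : ℕ) (X Y : Finset V) (hd : Disjoint X Y) (hX : t ≤ X.card)
    (hY : t ≤ Y.card) (hadj : ∀ x ∈ X, ∀ y ∈ Y, G.Adj x y) :
    ContainsBlowup G 2 t := by
  obtain ⟨X', hX's, hX'c⟩ := Finset.exists_subset_card_eq hX
  obtain ⟨Y', hY's, hY'c⟩ := Finset.exists_subset_card_eq hY
  have hd' : Disjoint X' Y' := hd.mono hX's hY's
  refine ⟨fun i => if i = 0 then X' else Y', ?_, ?_, ?_⟩
  · intro i
    fin_cases i
    · simpa using hX'c
    · simpa using hY'c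
  · intro i j hij
    fin_cases i <;> fin_cases j
    · exact absurd rfl hij
    · simpa using hd'
    · simpa using hd'.symm
    · exact absurd rfl hij
  · intro i j hij x hx y hy
    fin_cases i <;> fin_cases j
    · exact absurd rfl hij
    · simp only [show ((0 : Fin 2) = 0) = True by simp, if_true] at hx
      simp only [if_neg (by decide : ¬(1 : Fin 2) = 0)] at hy
      exact hadj x (hX's hx) y (hY's hy)
    · simp only [show ((0 : Fin 2) = 0) = True by simp, if_true] at hy
      simp only [if_neg (by decide : ¬(1 : Fin 2) = 0)] at hx
      exact (hadj y (hX's hy) x (hY's hx)).symm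
    · exact absurd rfl hij

variable {G}

lemma notIff_of_false {P Q : Prop} (h : ¬(P ↔ Q)) (hP : ¬P) : Q := by tauto
lemma notIff_of_true {P Q : Prop} (h : ¬(P ↔ Q)) (hP : P) : ¬Q := by tauto

lemma pairNotShatter (hVC : VCDimLE G 1) {x y : V} (hne : x ≠ y) :
    ∃ B ⊆ ({x, y} : Finset V), ∀ v, ¬(G.Adj v x ↔ x ∈ B) ∨ ¬(G.Adj v y ↔ y ∈ B) := by
  have h : ¬ GraphShatters G {x, y} := by
    intro h
    have := hVC _ h
    rw [Finset.card_insert_of_notMem (by simp [hne]), Finset.card_singleton] at this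
    omega
  unfold GraphShatters at h
  push_neg at h
  obtain ⟨B, hB, h⟩ := h
  refine ⟨B, hB, fun v => ?_⟩
  obtain ⟨s, hs, hiff⟩ := h v
  have hiff' : ¬(G.Adj v s ↔ s ∈ B) := by tauto
  rcases Finset.mem_insert.mp hs with h1 | h1
  · exact Or.inl (h1 ▸ hiff')
  · exact Or.inr ((Finset.mem_singleton.mp h1) ▸ hiff')

/-- Edge with a common neighbor dominates. -/
lemma lemL1 (hVC : VCDimLE G 1) {x y z : V} (hxy : G.Adj x y) (hzx : G.Adj z x)
    (hzy : G.Adj z y) : ∀ v, G.Adj x v ∨ G.Adj y v := by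
  intro v
  by_contra hcon
  push_neg at hcon
  obtain ⟨B, _, hB⟩ := pairNotShatter hVC (G.ne_of_adj hxy)
  have px : x ∈ B ∨ y ∉ B := by
    rcases hB x with h | h
    · exact Or.inl (notIff_of_false h (G.irrefl))
    · exact Or.inr (notIff_of_true h hxy)
  have py : x ∉ B ∨ y ∈ B := by
    rcases hB y with h | h
    · exact Or.inl (notIff_of_true h hxy.symm)
    · exact Or.inr (notIff_of_false h (G.irrefl))
  have pz : x ∉ B ∨ y ∉ B := by
    rcases hB z with h | h
    · exact Or.inl (notIff_of_true h hzx)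
    · exact Or.inr (notIff_of_true h hzy)
  have pv : x ∈ B ∨ y ∈ B := by
    rcases hB v with h | h
    · exact Or.inl (notIff_of_false h (fun h' => hcon.1 h'.symm))
    · exact Or.inr (notIff_of_false h (fun h' => hcon.2 h'.symm))
  tauto

/-- Nonadjacent pair with a common neighbor has nested neighborhoods. -/
lemma lemL2 (hVC : VCDimLE G 1) {x y z : V} (hne : x ≠ y) (hnadj : ¬ G.Adj x y)
    (hzx : G.Adj z x) (hzy : G.Adj z y) :
    (∀ w, G.Adj x w → G.Adj y w) ∨ (∀ w, G.Adj y w → G.Adj x w) := by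
  by_contra hcon
  push_neg at hcon
  obtain ⟨⟨w₁, hw1, hw1'⟩, ⟨w₂, hw2, hw2'⟩⟩ := hcon
  obtain ⟨B, _, hB⟩ := pairNotShatter hVC hne
  have p1 : x ∉ B ∨ y ∈ B := by
    rcases hB w₁ with h | h
    · exact Or.inl (notIff_of_true h hw1.symm)
    · exact Or.inr (notIff_of_false h (fun h' => hw1' h'.symm))
  have p2 : x ∈ B ∨ y ∉ B := by
    rcases hB w₂ with h | h
    · exact Or.inl (notIff_of_false h (fun h' => hw2' h'.symm))
    · exact Or.inr (notIff_of_true h hw2.symm)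
  have px : x ∈ B ∨ y ∈ B := by
    rcases hB x with h | h
    · exact Or.inl (notIff_of_false h (G.irrefl))
    · exact Or.inr (notIff_of_false h hnadj)
  have pz : x ∉ B ∨ y ∉ B := by
    rcases hB z with h | h
    · exact Or.inl (notIff_of_true h hzx)
    · exact Or.inr (notIff_of_true h hzy)
  tauto

/-- Common neighborhood of an edge is complete to its complement. -/
lemma lemD (hVC : VCDimLE G 1) {a b : V} (hab : G.Adj a b) :
    ∀ s ∈ G.neighborFinset a ∩ G.neighborFinset b,
      ∀ w ∉ G.neighborFinset a ∩ G.neighborFinset b, G.Adj s w := by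
  intro s hs w hw
  rw [Finset.mem_inter, SimpleGraph.mem_neighborFinset, SimpleGraph.mem_neighborFinset] at hs
  have hcases : ¬ G.Adj a w ∨ ¬ G.Adj b w := by
    by_contra h
    push_neg at h
    exact hw (by rw [Finset.mem_inter, SimpleGraph.mem_neighborFinset,
      SimpleGraph.mem_neighborFinset]; exact h)
  rcases hcases with h | h
  · rcases lemL1 hVC hs.1 hab.symm hs.2 w with h' | h'
    · exact absurd h' h
    · exact h'
  · rcases lemL1 hVC hs.2 hab hs.1 w with h' | h'
    · exact absurd h' h
    · exact h'

/-- Double counting adjacent pairs between two sets. -/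
lemma dcount (A B : Finset V) :
    ∑ v ∈ A, (G.neighborFinset v ∩ B).card = ∑ w ∈ B, (G.neighborFinset w ∩ A).card := by
  have key : ∀ (T : Finset V) (v : V),
      (G.neighborFinset v ∩ T).card = ∑ w ∈ T, if G.Adj v w then 1 else 0 := by
    intro T v
    rw [← Finset.card_filter]
    congr 1
    ext w
    simp [SimpleGraph.mem_neighborFinset, and_comm]
  calc ∑ v ∈ A, (G.neighborFinset v ∩ B).card
      = ∑ v ∈ A, ∑ w ∈ B, if G.Adj v w then 1 else 0 := by
        exact Finset.sum_congr rfl fun v _ => key B v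
    _ = ∑ w ∈ B, ∑ v ∈ A, if G.Adj v w then 1 else 0 := Finset.sum_comm
    _ = ∑ w ∈ B, (G.neighborFinset w ∩ A).card := by
        refine Finset.sum_congr rfl fun w _ => ?_
        rw [key A w]
        exact Finset.sum_congr rfl fun v _ => if_congr (G.adj_comm v w) rfl rfl

/-- Core lemma: from a set `Q` whose pairs all have a common neighbor, with
all degrees at least `2t`, either win, or find an edge with large common
neighborhood. -/
lemma core (hVC : VCDimLE G 1) (t : ℕ) (p : V) (Q : Finset V)
    (hp : ∀ q ∈ Q, G.Adj p q)
    (hdeg : ∀ q ∈ Q, 2 * t ≤ (G.neighborFinset q).card)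
    (hQ : 10 * t + 10 ≤ Q.card) :
    ContainsBlowup G 2 t ∨ ∃ q₁ ∈ Q, ∃ q₂ ∈ Q, G.Adj q₁ q₂ ∧
      t ≤ (G.neighborFinset q₁ ∩ G.neighborFinset q₂).card := by
  classical
  set upF : V → Finset V :=
    fun q => Q.filter (fun y => q ≠ y ∧ G.neighborFinset q ⊆ G.neighborFinset y) with hupF
  by_cases hwin : ∃ q ∈ Q, t ≤ (upF q).card
  · left
    obtain ⟨q, hqQ, hcard⟩ := hwin
    obtain ⟨T, hTsub, hTcard⟩ := Finset.exists_subset_card_eq hcard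
    have hY : t ≤ (G.neighborFinset q \ T).card := by
      have h1 := Finset.le_card_sdiff T (G.neighborFinset q)
      have h2 := hdeg q hqQ
      omega
    refine blowup2 G t T (G.neighborFinset q \ T) Finset.sdiff_disjoint.symm
      (le_of_eq hTcard.symm) hY ?_
    intro x hx y hy
    have hx' := hTsub hx
    rw [hupF, Finset.mem_filter] at hx'
    have : y ∈ G.neighborFinset x := hx'.2.2 (Finset.mem_sdiff.mp hy).1
    rwa [SimpleGraph.mem_neighborFinset] at this
  · right
    push_neg at hwin
    set badF : V → Finset V := fun q => Q.filter (fun y => y ≠ q ∧ ¬ G.Adj q y) with hbadF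
    set downF : V → Finset V :=
      fun q => Q.filter (fun y => y ≠ q ∧ G.neighborFinset y ⊆ G.neighborFinset q) with hdownF
    have hbadsub : ∀ q ∈ Q, badF q ⊆ upF q ∪ downF q := by
      intro q hq y hy
      rw [hbadF, Finset.mem_filter] at hy
      obtain ⟨hyQ, hyne, hynadj⟩ := hy
      rcases lemL2 hVC (Ne.symm hyne) hynadj (hp q hq) (hp y hyQ) with h | h
      · refine Finset.mem_union_left _ ?_
        rw [hupF, Finset.mem_filter]
        refine ⟨hyQ, Ne.symm hyne, fun w hw => ?_⟩
        rw [SimpleGraph.mem_neighborFinset] at hw ⊢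
        exact h w hw
      · refine Finset.mem_union_right _ ?_
        rw [hdownF, Finset.mem_filter]
        refine ⟨hyQ, hyne, fun w hw => ?_⟩
        rw [SimpleGraph.mem_neighborFinset] at hw ⊢
        exact h w hw
    have hdu : ∑ q ∈ Q, (downF q).card = ∑ q ∈ Q, (upF q).card := by
      have h1 : ∀ q, (downF q).card =
          ∑ y ∈ Q, if y ≠ q ∧ G.neighborFinset y ⊆ G.neighborFinset q then 1 else 0 :=
        fun q => Finset.card_filter _ _
      have h2 : ∀ y, (upF y).card =
          ∑ q ∈ Q, if y ≠ q ∧ G.neighborFinset y ⊆ G.neighborFinset q then 1 else 0 :=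
        fun y => Finset.card_filter _ _
      calc ∑ q ∈ Q, (downF q).card
          = ∑ q ∈ Q, ∑ y ∈ Q, if y ≠ q ∧ G.neighborFinset y ⊆ G.neighborFinset q then 1 else 0 :=
            Finset.sum_congr rfl fun q _ => h1 q
        _ = ∑ y ∈ Q, ∑ q ∈ Q, if y ≠ q ∧ G.neighborFinset y ⊆ G.neighborFinset q then 1 else 0 :=
            Finset.sum_comm
        _ = ∑ y ∈ Q, (upF y).card := Finset.sum_congr rfl fun y _ => (h2 y).symm
    have hupbound : ∑ q ∈ Q, (upF q).card ≤ t * Q.card := by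
      rw [mul_comm]
      exact Finset.sum_le_card_nsmul _ _ _ fun q hq => le_of_lt (hwin q hq)
    have hsumbad : ∑ q ∈ Q, (badF q).card ≤ 2 * t * Q.card := by
      calc ∑ q ∈ Q, (badF q).card
          ≤ ∑ q ∈ Q.attach, ((upF q.1).card + (downF q.1).card) := by
            rw [← Finset.sum_attach Q fun q => (badF q).card]
            refine Finset.sum_le_sum fun q _ => ?_
            calc (badF q.1).card ≤ (upF q.1 ∪ downF q.1).card :=
                  Finset.card_le_card (hbadsub q.1 q.2)
              _ ≤ (upF q.1).card + (downF q.1).card := Finset.card_union_le _ _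
        _ = ∑ q ∈ Q, ((upF q).card + (downF q).card) :=
            Finset.sum_attach Q fun q => (upF q).card + (downF q).card
        _ = ∑ q ∈ Q, (upF q).card + ∑ q ∈ Q, (downF q).card := Finset.sum_add_distrib
        _ ≤ t * Q.card + t * Q.card := by rw [hdu]; omega
        _ = 2 * t * Q.card := by ring
    set Qbig := Q.filter (fun q => ¬ (badF q).card ≤ 4 * t) with hQbig
    set Q' := Q.filter (fun q => (badF q).card ≤ 4 * t) with hQ'
    have hpart : Q'.card + Qbig.card = Q.card :=
      Finset.card_filter_add_card_filter_not _
    have hQbigsum : Qbig.card * (4 * t + 1) ≤ 2 * t * Q.card := by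
      calc Qbig.card * (4 * t + 1) = ∑ _q ∈ Qbig, (4 * t + 1) := by
            rw [Finset.sum_const, smul_eq_mul]
        _ ≤ ∑ q ∈ Qbig, (badF q).card := by
            refine Finset.sum_le_sum fun q hq => ?_
            have := (Finset.mem_filter.mp hq).2
            omega
        _ ≤ ∑ q ∈ Q, (badF q).card :=
            Finset.sum_le_sum_of_subset (Finset.filter_subset _ _)
        _ ≤ 2 * t * Q.card := hsumbad
    have h2Qbig : 2 * Qbig.card ≤ Q.card := by
      have h1 : (2 * Qbig.card) * (4 * t + 1) ≤ Q.card * (4 * t + 1) := by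
        calc (2 * Qbig.card) * (4 * t + 1) = 2 * (Qbig.card * (4 * t + 1)) := by ring
          _ ≤ 2 * (2 * t * Q.card) := by omega
          _ = 4 * t * Q.card := by ring
          _ ≤ Q.card * (4 * t + 1) := by nlinarith
      exact Nat.le_of_mul_le_mul_right h1 (by omega)
    have hQ'card : 5 * t + 5 ≤ Q'.card := by omega
    have hQ'ne : Q'.Nonempty := Finset.card_pos.mp (by omega)
    obtain ⟨q₁, hq₁⟩ := hQ'ne
    have hq₁Q : q₁ ∈ Q := Finset.mem_of_mem_filter _ hq₁
    have hbad₁ : (badF q₁).card ≤ 4 * t := (Finset.mem_filter.mp hq₁).2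
    have hq₂ex : (Q' \ insert q₁ (badF q₁)).Nonempty := by
      apply Finset.card_pos.mp
      have h1 := Finset.le_card_sdiff (insert q₁ (badF q₁)) Q'
      have h2 : (insert q₁ (badF q₁)).card ≤ 4 * t + 1 := by
        calc (insert q₁ (badF q₁)).card ≤ (badF q₁).card + 1 := Finset.card_insert_le _ _
          _ ≤ 4 * t + 1 := by omega
      omega
    obtain ⟨q₂, hq₂⟩ := hq₂ex
    rw [Finset.mem_sdiff] at hq₂
    have hq₂Q' : q₂ ∈ Q' := hq₂.1
    have hq₂Q : q₂ ∈ Q := Finset.mem_of_mem_filter _ hq₂Q'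
    have hbad₂ : (badF q₂).card ≤ 4 * t := (Finset.mem_filter.mp hq₂Q').2
    have hq₂ne : q₂ ≠ q₁ := fun h => hq₂.2 (h ▸ Finset.mem_insert_self _ _)
    have hadj12 : G.Adj q₁ q₂ := by
      by_contra hna
      exact hq₂.2 (Finset.mem_insert_of_mem (by
        rw [hbadF, Finset.mem_filter]; exact ⟨hq₂Q, hq₂ne, hna⟩))
    have hsub : Q \ (insert q₁ (insert q₂ (badF q₁ ∪ badF q₂))) ⊆
        G.neighborFinset q₁ ∩ G.neighborFinset q₂ := by
      intro y hy
      rw [Finset.mem_sdiff] at hy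
      obtain ⟨hyQ, hyn⟩ := hy
      simp only [Finset.mem_insert, Finset.mem_union, not_or] at hyn
      obtain ⟨hyne₁, hyne₂, hynb₁, hynb₂⟩ := hyn
      have h1 : G.Adj q₁ y := by
        by_contra hna
        exact hynb₁ (by rw [hbadF, Finset.mem_filter]; exact ⟨hyQ, hyne₁, hna⟩)
      have h2 : G.Adj q₂ y := by
        by_contra hna
        exact hynb₂ (by rw [hbadF, Finset.mem_filter]; exact ⟨hyQ, hyne₂, hna⟩)
      rw [Finset.mem_inter, SimpleGraph.mem_neighborFinset, SimpleGraph.mem_neighborFinset]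
      exact ⟨h1, h2⟩
    have hcardsub : t ≤ (Q \ (insert q₁ (insert q₂ (badF q₁ ∪ badF q₂)))).card := by
      have h1 := Finset.le_card_sdiff (insert q₁ (insert q₂ (badF q₁ ∪ badF q₂))) Q
      have h2 : (insert q₁ (insert q₂ (badF q₁ ∪ badF q₂))).card ≤ 8 * t + 2 := by
        calc (insert q₁ (insert q₂ (badF q₁ ∪ badF q₂))).card
            ≤ (insert q₂ (badF q₁ ∪ badF q₂)).card + 1 := Finset.card_insert_le _ _
          _ ≤ (badF q₁ ∪ badF q₂).card + 2 := by
              have := Finset.card_insert_le q₂ (badF q₁ ∪ badF q₂); omega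
          _ ≤ (badF q₁).card + (badF q₂).card + 2 := by
              have := Finset.card_union_le (badF q₁) (badF q₂); omega
          _ ≤ 8 * t + 2 := by omega
      omega
    exact ⟨q₁, hq₁Q, q₂, hq₂Q, hadj12, le_trans hcardsub (Finset.card_le_card hsub)⟩

lemma recMain (hVC : VCDimLE G 1) (t : ℕ) (ht3 : 3 * t ≤ Fintype.card V)
    (big : Finset V) (hbigdeg : ∀ v ∈ big, 2 * t ≤ (G.neighborFinset v).card)
    (hbigcard : 11 * t + 10 ≤ big.card) :
    ∀ M : ℕ, ∀ U : Finset V, (∀ s, s ∉ U → ∀ u ∈ U, G.Adj s u) → U.Nonempty →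
      U.card ≤ 2 * t → Uᶜ.card ≤ M → ContainsBlowup G 2 t := by
  intro M
  induction M with
  | zero =>
    intro U h1 hne hcard hM
    exfalso
    rw [Finset.card_compl] at hM
    have h2 : U.card ≤ Fintype.card V := Finset.card_le_univ U
    have h3 : 1 ≤ U.card := Finset.card_pos.mpr hne
    omega
  | succ M ih =>
    intro U h1 hne hcard hM
    by_cases hwin : t ≤ U.card
    · refine blowup2 G t U Uᶜ disjoint_compl_right hwin ?_ ?_
      · rw [Finset.card_compl]; omega
      · intro x hx y hy
        exact (h1 y (Finset.mem_compl.mp hy) x hx).symm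
    · push_neg at hwin
      obtain ⟨u₀, hu₀⟩ := hne
      have hQcore := core hVC t u₀ (big \ U)
        (fun q hq => (h1 q (Finset.mem_sdiff.mp hq).2 u₀ hu₀).symm)
        (fun q hq => hbigdeg q (Finset.mem_sdiff.mp hq).1)
        (by have := Finset.le_card_sdiff U big; omega)
      rcases hQcore with hblow | ⟨q₁, hq₁, q₂, _hq₂, hadj, hC⟩
      · exact hblow
      · set C := G.neighborFinset q₁ ∩ G.neighborFinset q₂ with hCdef
        have hD : ∀ s ∈ C, ∀ w ∉ C, G.Adj s w := lemD hVC hadj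
        by_cases hC2 : t ≤ Cᶜ.card
        · refine blowup2 G t C Cᶜ disjoint_compl_right hC hC2 ?_
          intro x hx y hy
          exact hD x hx y (Finset.mem_compl.mp hy)
        · push_neg at hC2
          have hq₁C : q₁ ∉ C := by
            intro h
            exact G.irrefl ((SimpleGraph.mem_neighborFinset _ _ _).mp (Finset.mem_inter.mp h).1)
          have hq₁U : q₁ ∉ U := (Finset.mem_sdiff.mp hq₁).2
          refine ih (U ∪ Cᶜ) ?_ ⟨u₀, Finset.mem_union_left _ hu₀⟩ ?_ ?_
          · intro s hs u hu
            rw [Finset.mem_union] at hs hu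
            push_neg at hs
            have hsC : s ∈ C := by
              have := hs.2
              rwa [Finset.mem_compl, not_not] at this
            rcases hu with hu | hu
            · exact h1 s hs.1 u hu
            · exact hD s hsC u (Finset.mem_compl.mp hu)
          · have h4 := Finset.card_union_le U Cᶜ
            omega
          · have hsub : (U ∪ Cᶜ)ᶜ ⊆ Uᶜ.erase q₁ := by
              intro s hs
              rw [Finset.mem_compl, Finset.mem_union] at hs
              push_neg at hs
              rw [Finset.mem_erase]
              constructor
              · rintro rfl
                exact hs.2 (Finset.mem_compl.mpr hq₁C)
              · exact Finset.mem_compl.mpr hs.1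
            have h5 := Finset.card_le_card hsub
            have h6 : (Uᶜ.erase q₁).card = Uᶜ.card - 1 :=
              Finset.card_erase_of_mem (Finset.mem_compl.mpr hq₁U)
            have h7 : 1 ≤ Uᶜ.card := Finset.card_pos.mpr ⟨q₁, Finset.mem_compl.mpr hq₁U⟩
            omega
end VC1Aux

open Finset in
theorem stmt_14 (c : ℝ) (hc : 0 < c) :
    ∃ c' : ℝ, 0 < c' ∧ ∃ n₀ : ℕ, ∀ n : ℕ, n₀ ≤ n →
      ∀ G : SimpleGraph (Fin n), VCDimLE G 1 →
        c * (n.choose 2 : ℝ) ≤ (G.edgeSet.ncard : ℝ) →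
        ContainsBlowup G 2 ⌊c' * (n : ℝ)⌋₊ := by
  set c₁ : ℝ := min c 1 with hc₁def
  have hc₁ : 0 < c₁ := lt_min hc one_pos
  have hc₁le : c₁ ≤ 1 := min_le_right c 1
  have hc₁c : c₁ ≤ c := min_le_left c 1
  refine ⟨c₁ / 100, by positivity, ⌈(20000:ℝ) / c₁⌉₊, ?_⟩
  intro n hn G hVC hm
  letI : DecidableRel G.Adj := Classical.decRel _
  set t : ℕ := ⌊c₁ / 100 * (n:ℝ)⌋₊ with htdef
  -- numeric facts
  have hn' : (20000:ℝ) / c₁ ≤ (n:ℝ) := Nat.ceil_le.mp hn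
  have hcn : (20000:ℝ) ≤ c₁ * n := by
    rw [div_le_iff₀ hc₁] at hn'
    linarith
  have hnR : (0:ℝ) ≤ n := Nat.cast_nonneg n
  have htle : (t:ℝ) ≤ c₁ * n / 100 := by
    have h := Nat.floor_le (show (0:ℝ) ≤ c₁/100 * n by positivity)
    calc (t:ℝ) ≤ c₁/100 * n := h
      _ = c₁ * n/100 := by ring
  have ht1 : 1 ≤ t := Nat.le_floor (by push_cast; linarith)
  have hn3 : 3 * t ≤ n := by
    have h : ((3*t:ℕ):ℝ) ≤ (n:ℝ) := by push_cast; nlinarith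
    exact_mod_cast h
  have hnpos : 0 < n := by omega
  -- edge counts
  have hedge : G.edgeSet.ncard = G.edgeFinset.card := by
    rw [Set.ncard_eq_toFinset_card']
    exact congrArg Finset.card (by ext e; simp)
  set m : ℕ := G.edgeFinset.card with hmdef
  rw [hedge] at hm
  have hm2 : c₁ * n * ((n:ℝ) - 1) ≤ 2 * m := by
    have hch : ((n.choose 2:ℕ):ℝ) = n*((n:ℝ)-1)/2 := Nat.cast_choose_two (K := ℝ) n
    rw [hch] at hm
    have h1 : (1:ℝ) ≤ n := by exact_mod_cast hnpos
    nlinarith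
  have hKreal : (((14*t+10)*n : ℕ):ℝ) ≤ 2*(m:ℝ) := by
    push_cast
    have h14 : (14*(t:ℝ)+10) ≤ c₁*((n:ℝ)-1) := by nlinarith
    nlinarith [mul_le_mul_of_nonneg_right h14 hnR]
  have hK : (14*t+10)*n ≤ 2*m := by exact_mod_cast hKreal
  -- big vertices
  set big : Finset (Fin n) := Finset.univ.filter (fun v => 2*t ≤ (G.neighborFinset v).card)
    with hbigdef
  have hbigdeg : ∀ v ∈ big, 2*t ≤ (G.neighborFinset v).card := fun v hv =>
    (Finset.mem_filter.mp hv).2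
  have hsmalldeg : ∀ v ∈ bigᶜ, (G.neighborFinset v).card ≤ 2*t := by
    intro v hv
    rw [Finset.mem_compl, hbigdef, Finset.mem_filter] at hv
    push_neg at hv
    have := hv (Finset.mem_univ v)
    omega
  have hdegsum : ∑ v, (G.neighborFinset v).card = 2*m := G.sum_degrees_eq_twice_card_edges
  have hcardV : Fintype.card (Fin n) = n := Fintype.card_fin n
  have hNle : ∀ v : Fin n, (G.neighborFinset v).card ≤ n := fun v => by
    have := Finset.card_le_univ (G.neighborFinset v)
    rwa [hcardV] at this
  have hcomple : bigᶜ.card ≤ n := by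
    have := Finset.card_le_univ bigᶜ
    rwa [hcardV] at this
  have hbigle : big.card ≤ n := by
    have := Finset.card_le_univ big
    rwa [hcardV] at this
  have hsplit : ∑ v ∈ big, (G.neighborFinset v).card
      + ∑ v ∈ bigᶜ, (G.neighborFinset v).card = 2*m := by
    rw [← hdegsum, ← Finset.sum_add_sum_compl big]
  have hs1 : ∑ v ∈ big, (G.neighborFinset v).card ≤ big.card * n :=
    Finset.sum_le_card_nsmul _ _ _ (fun v _ => hNle v)
  have hs2 : ∑ v ∈ bigᶜ, (G.neighborFinset v).card ≤ n * (2*t) := by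
    calc ∑ v ∈ bigᶜ, (G.neighborFinset v).card ≤ bigᶜ.card * (2*t) :=
          Finset.sum_le_card_nsmul _ _ _ hsmalldeg
      _ ≤ n * (2*t) := Nat.mul_le_mul_right _ hcomple
  have hbigcard : 12*t + 10 ≤ big.card := by
    have hfin : (14*t+10) * n ≤ (big.card + 2*t) * n := by
      calc (14*t+10)*n ≤ 2*m := hK
        _ = ∑ v ∈ big, (G.neighborFinset v).card
            + ∑ v ∈ bigᶜ, (G.neighborFinset v).card := hsplit.symm
        _ ≤ big.card * n + n * (2*t) := Nat.add_le_add hs1 hs2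
        _ = (big.card + 2*t) * n := by ring
    have := Nat.le_of_mul_le_mul_right hfin hnpos
    omega
  -- bootstrap: find a pivot x
  set F : ℕ := ∑ v ∈ big, (G.neighborFinset v ∩ big).card with hFdef
  have hsd : ∀ v : Fin n, (G.neighborFinset v ∩ big).card
      + (G.neighborFinset v ∩ bigᶜ).card = (G.neighborFinset v).card := by
    intro v
    have he : G.neighborFinset v ∩ bigᶜ = G.neighborFinset v \ big := by
      ext w
      simp [Finset.mem_sdiff, Finset.mem_compl]
    rw [he]
    exact Finset.card_inter_add_card_sdiff _ _
  have hcross : ∑ v ∈ big, (G.neighborFinset v ∩ bigᶜ).card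
      = ∑ w ∈ bigᶜ, (G.neighborFinset w ∩ big).card := VC1Aux.dcount big bigᶜ
  have hFbound : 2*m ≤ F + 4*t*n := by
    have e1 : ∑ v ∈ big, (G.neighborFinset v).card
        = F + ∑ v ∈ big, (G.neighborFinset v ∩ bigᶜ).card := by
      rw [hFdef, ← Finset.sum_add_distrib]
      exact Finset.sum_congr rfl fun v _ => (hsd v).symm
    have e2 : ∑ w ∈ bigᶜ, (G.neighborFinset w ∩ big).card ≤ n*(2*t) := by
      calc ∑ w ∈ bigᶜ, (G.neighborFinset w ∩ big).card
          ≤ ∑ w ∈ bigᶜ, (G.neighborFinset w).card :=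
            Finset.sum_le_sum (fun w _ => Finset.card_le_card Finset.inter_subset_left)
        _ ≤ n * (2*t) := hs2
    have := hsplit
    rw [e1, hcross] at this
    have h4 : n*(2*t) + n*(2*t) = 4*t*n := by ring
    omega
  have hxex : ∃ x ∈ big, 10*t + 10 ≤ (G.neighborFinset x ∩ big).card := by
    by_contra hcon
    push_neg at hcon
    have hFle : F ≤ big.card * (10*t+9) :=
      Finset.sum_le_card_nsmul _ _ _ (fun v hv => by have := hcon v hv; omega)
    have hFle2 : F ≤ n*(10*t+9) :=
      le_trans hFle (Nat.mul_le_mul_right _ hbigle)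
    have hr1 : (14*t+10)*n = 14*(t*n) + 10*n := by ring
    have hr2 : n*(10*t+9) + 4*t*n = 14*(t*n) + 9*n := by ring
    have := hK
    omega
  obtain ⟨x, hxbig, hxQ⟩ := hxex
  rcases VC1Aux.core hVC t x (G.neighborFinset x ∩ big)
    (fun q hq => (SimpleGraph.mem_neighborFinset _ _ _).mp (Finset.mem_inter.mp hq).1)
    (fun q hq => hbigdeg q (Finset.mem_inter.mp hq).2) hxQ with hblow | hfound
  · exact hblow
  · obtain ⟨q₁, hq₁, q₂, hq₂, hadj, hC⟩ := hfound
    set C : Finset (Fin n) := G.neighborFinset q₁ ∩ G.neighborFinset q₂ with hCdef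
    have hD : ∀ s ∈ C, ∀ w ∉ C, G.Adj s w := VC1Aux.lemD hVC hadj
    by_cases hC2 : t ≤ Cᶜ.card
    · exact VC1Aux.blowup2 G t C Cᶜ disjoint_compl_right hC hC2
        (fun a ha b hb => hD a ha b (Finset.mem_compl.mp hb))
    · push_neg at hC2
      have hq₁C : q₁ ∉ C := fun h =>
        G.irrefl ((SimpleGraph.mem_neighborFinset _ _ _).mp (Finset.mem_inter.mp h).1)
      refine VC1Aux.recMain hVC t (by rw [hcardV]; exact hn3) big hbigdeg (by omega)
        Cᶜᶜ.card Cᶜ ?_ ⟨q₁, Finset.mem_compl.mpr hq₁C⟩ (by omega) le_rfl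
      intro s hs u hu
      rw [Finset.mem_compl, not_not] at hs
      exact hD s hs u (Finset.mem_compl.mp hu)
end

section
/- Let G be a graph with VC-dimension at most 1. If x_1, x_2, x_3 are vertices of G forming a triangle (pairwise adjacent), then every vertex v ∉ {x_1, x_2, x_3} is adjacent to at least two of the vertices x_1, x_2, x_3. -/
lemma pairShattered {V : Type*} [DecidableEq V] (G : SimpleGraph V) (a b c v : V)
    (hab : G.Adj a b) (hca : G.Adj c a) (hcb : G.Adj c b)
    (hva : ¬G.Adj v a) (hvb : ¬G.Adj v b) :
    GraphShatters G {a, b} := by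
  intro B _
  have hne : a ≠ b := hab.ne
  by_cases haB : a ∈ B <;> by_cases hbB : b ∈ B
  · refine ⟨c, ?_⟩
    intro x hx
    rcases Finset.mem_insert.mp hx with rfl | hx
    · simp [hca, haB]
    · rw [Finset.mem_singleton] at hx; subst hx; simp [hcb, hbB]
  · refine ⟨b, ?_⟩
    intro x hx
    rcases Finset.mem_insert.mp hx with rfl | hx
    · simp [hab.symm, haB]
    · rw [Finset.mem_singleton] at hx; subst hx; simp [hbB]
  · refine ⟨a, ?_⟩
    intro x hx
    rcases Finset.mem_insert.mp hx with rfl | hx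
    · simp [haB]
    · rw [Finset.mem_singleton] at hx; subst hx; simp [hab, hbB]
  · refine ⟨v, ?_⟩
    intro x hx
    rcases Finset.mem_insert.mp hx with rfl | hx
    · simp [hva, haB]
    · rw [Finset.mem_singleton] at hx; subst hx; simp [hvb, hbB]

theorem stmt_15 {V : Type*} [DecidableEq V] (G : SimpleGraph V) (hVC : VCDimLE G 1)
    (x₁ x₂ x₃ : V) (h12 : G.Adj x₁ x₂) (h13 : G.Adj x₁ x₃) (h23 : G.Adj x₂ x₃)
    (v : V) (hv1 : v ≠ x₁) (hv2 : v ≠ x₂) (hv3 : v ≠ x₃) :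
    (G.Adj v x₁ ∧ G.Adj v x₂) ∨ (G.Adj v x₁ ∧ G.Adj v x₃) ∨ (G.Adj v x₂ ∧ G.Adj v x₃) := by
  by_contra h
  push_neg at h
  obtain ⟨h1, h2, h3⟩ := h
  have key : ∀ a b c : V, G.Adj a b → G.Adj c a → G.Adj c b →
      ¬G.Adj v a → ¬G.Adj v b → False := by
    intro a b c hab hca hcb hva hvb
    have := hVC {a, b} (pairShattered G a b c v hab hca hcb hva hvb)
    rw [Finset.card_insert_of_notMem (by simp [hab.ne]), Finset.card_singleton] at this
    omega
  by_cases hA1 : G.Adj v x₁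
  · exact key x₂ x₃ x₁ h23 h12 h13 (h1 hA1) (h2 hA1)
  · by_cases hA2 : G.Adj v x₂
    · exact key x₁ x₃ x₂ h13 h12.symm h23 hA1 (h3 hA2)
    · exact key x₁ x₂ x₃ h12 h13.symm h23.symm hA1 hA2
end

section
/- Let G be a graph with VC-dimension at most 1. If y_1, y_2, y_3, y_4, y_5 are five distinct vertices of G with y_i adjacent to y_{i+1} for i = 1, 2, 3, 4 (a copy of the path P_5, not necessarily induced), then at least one of the pairs y_1y_4, y_2y_4, y_2y_5 is an edge of G. -/
theorem stmt_16 {V : Type*} [DecidableEq V] (G : SimpleGraph V) (hVC : VCDimLE G 1)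
    (y : Fin 5 → V) (hinj : Function.Injective y)
    (hpath : ∀ i : Fin 4, G.Adj (y i.castSucc) (y i.succ)) :
    G.Adj (y 0) (y 3) ∨ G.Adj (y 1) (y 3) ∨ G.Adj (y 1) (y 4) := by
  by_contra hcon
  push_neg at hcon
  obtain ⟨h03, h13, h14⟩ := hcon
  have h01 : G.Adj (y 0) (y 1) := hpath 0
  have h12 : G.Adj (y 1) (y 2) := hpath 1
  have h23 : G.Adj (y 2) (y 3) := hpath 2
  have h34 : G.Adj (y 3) (y 4) := hpath 3
  have hne : y 1 ≠ y 3 := fun h => by simpa using hinj h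
  have hsh : GraphShatters G {y 1, y 3} := by
    intro B hB
    by_cases hb1 : y 1 ∈ B <;> by_cases hb3 : y 3 ∈ B
    · refine ⟨y 2, fun x hx => ?_⟩
      rcases Finset.mem_insert.mp hx with h | h
      · subst h; simp [hb1, h12.symm]
      · rw [Finset.mem_singleton] at h; subst h; simp [hb3, h23]
    · refine ⟨y 0, fun x hx => ?_⟩
      rcases Finset.mem_insert.mp hx with h | h
      · subst h; simp [hb1, h01]
      · rw [Finset.mem_singleton] at h; subst h; simp [hb3, h03]
    · refine ⟨y 4, fun x hx => ?_⟩
      rcases Finset.mem_insert.mp hx with h | h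
      · subst h; simp only [hb1, iff_false]; exact fun a => h14 a.symm
      · rw [Finset.mem_singleton] at h; subst h; simp [hb3, h34.symm]
    · refine ⟨y 1, fun x hx => ?_⟩
      rcases Finset.mem_insert.mp hx with h | h
      · subst h; simp [hb1]
      · rw [Finset.mem_singleton] at h; subst h; simp [hb3, h13]
  have hcard := hVC _ hsh
  rw [Finset.card_insert_of_notMem (by simp [hne]), Finset.card_singleton] at hcard
  omega
end

section
/- Let (P, ≺) be a finite partially ordered set and let ≤' be a linear extension of ≺ (a linear order on P such that x ≺ y implies x ≤' y). Let ℓ ≥ 1 and let B_1, ..., B_ℓ and C_1, ..., C_ℓ be nonempty subsets of P such that B_1 ≺ B_2 ≺ ... ≺ B_ℓ and C_1 ≺ C_2 ≺ ... ≺ C_ℓ (where for sets X, Y we write X ≺ Y to mean that every element of X is ≺-below every element of Y), and such that every element of B_1 ∪ ... ∪ B_ℓ is strictly ≤'-below every element of C_1 ∪ ... ∪ C_ℓ. Call a pair (u, u') with u, u' ∈ {1,...,ℓ} inhomogeneous if it is not the case that B_u ≺ C_{u'}, and it is not the case that B_u and C_{u'} are completely incomparable (i.e., some element of B_u is comparable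 in ≺ to some element of C_{u'}). Then the number of inhomogeneous pairs (u, u') is at most 2ℓ − 1. -/
theorem stmt_19 {α : Type*} [Fintype α]
    (R : α → α → Prop) (hR : IsStrictOrder α R)
    (L : α → α → Prop) (hL : IsLinearOrder α L)
    (hext : ∀ x y : α, R x y → L x y)
    (ℓ : ℕ) (hℓ : 1 ≤ ℓ) (B C : Fin ℓ → Finset α)
    (hBne : ∀ u, (B u).Nonempty) (hCne : ∀ u, (C u).Nonempty)
    (hBchain : ∀ u v : Fin ℓ, u < v → ∀ x ∈ B u, ∀ y ∈ B v, R x y)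
    (hCchain : ∀ u v : Fin ℓ, u < v → ∀ x ∈ C u, ∀ y ∈ C v, R x y)
    (hBbelowC : ∀ u v : Fin ℓ, ∀ x ∈ B u, ∀ y ∈ C v, L x y ∧ x ≠ y) :
    Set.ncard {p : Fin ℓ × Fin ℓ |
      ¬ (∀ x ∈ B p.1, ∀ y ∈ C p.2, R x y) ∧
      ¬ (∀ x ∈ B p.1, ∀ y ∈ C p.2, ¬ R x y ∧ ¬ R y x)} ≤ 2 * ℓ - 1 := by
  haveI := hR.toIsTrans
  classical
  set S := {p : Fin ℓ × Fin ℓ |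
      ¬ (∀ x ∈ B p.1, ∀ y ∈ C p.2, R x y) ∧
      ¬ (∀ x ∈ B p.1, ∀ y ∈ C p.2, ¬ R x y ∧ ¬ R y x)} with hS
  -- for any inhomogeneous pair, there exist x ∈ B, y ∈ C with R x y
  have hA : ∀ p ∈ S, ∃ x ∈ B p.1, ∃ y ∈ C p.2, R x y := by
    rintro ⟨u, v⟩ ⟨-, h2⟩
    by_contra hno
    push_neg at hno
    apply h2
    intro x hx y hy
    refine ⟨hno x hx y hy, fun hyx => ?_⟩
    have hL1 := hext y x hyx
    have hL2 := hBbelowC u v x hx y hy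
    exact hL2.2 (hL.toIsPartialOrder.antisymm x y hL2.1 hL1)
  -- key claim: p, q ∈ S with p.1 < q.1 implies p.2 ≤ q.2
  have key : ∀ p ∈ S, ∀ q ∈ S, p.1 < q.1 → p.2 ≤ q.2 := by
    rintro ⟨u, v⟩ hp ⟨u', v'⟩ hq hlt
    by_contra hgt
    push_neg at hgt
    obtain ⟨x, hx, y, hy, hxy⟩ := hA _ hq
    apply hp.1
    intro x' hx' y' hy'
    have h1 : R x' x := hBchain u u' hlt x' hx' x hx
    have h2 : R y y' := hCchain v' v hgt y hy y' hy'
    exact Trans.trans (Trans.trans h1 hxy) h2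
  have hfin : S.Finite := Set.toFinite S
  rw [Set.ncard_eq_toFinset_card' S]
  have := Finset.card_le_card_of_injOn (fun p : Fin ℓ × Fin ℓ => (p.1 : ℕ) + p.2)
    (s := S.toFinset) (t := Finset.range (2 * ℓ - 1))
    (by
      rintro ⟨u, v⟩ hp
      simp only [Finset.mem_coe, Finset.mem_range]
      have hu := u.2
      have hv := v.2
      omega)
    (by
      rintro ⟨u, v⟩ hp ⟨u', v'⟩ hq heq
      simp only [Finset.mem_coe, Set.mem_toFinset] at hp hq
      simp only at heq
      rcases lt_trichotomy u u' with h | h | h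
      · have := key ⟨u,v⟩ hp ⟨u',v'⟩ hq h
        have : (v : ℕ) ≤ v' := this
        have : (u : ℕ) < u' := h
        omega
      · have : v = v' := by
          apply Fin.ext
          have : (u : ℕ) = u' := congrArg Fin.val h
          omega
        rw [h, this]
      · have := key ⟨u',v'⟩ hq ⟨u,v⟩ hp h
        have : (v' : ℕ) ≤ v := this
        have : (u' : ℕ) < u := h
        omega)
  simpa using this
end
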